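/- If a syntactic protocol P is symmetric, then its extension is symmetric: for every permutation J of the agents and every initial gossip graph G, the extension Q of P satisfies Q(J(G)) = J(Q(G)), where J(G) relabels the agents of G by J and J(Q(G)) = { J(σ) : σ ∈ Q(G) } with J applied callwise to call sequences. -/

import Mathlib

set_option maxHeartbeats 1000000

structure GossipGraph (A : Type) : Type where
  N : A → A → Prop
  S : A → A → Prop
  refl_S : ∀ a, S a a
  S_sub_N : ∀ a b, S a b → N a b

namespace Gossip

variable {A : Type}

def Initial (G : GossipGraph A) : Prop := ∀ a b, G.S a b ↔ a = b

def doCall (G : GossipGraph A) (c : A × A) : GossipGraph A where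
  N x y := G.N x y ∨ ((x = c.1 ∨ x = c.2) ∧ (G.N c.1 y ∨ G.N c.2 y))
  S x y := G.S x y ∨ ((x = c.1 ∨ x = c.2) ∧ (G.S c.1 y ∨ G.S c.2 y))
  refl_S a := Or.inl (G.refl_S a)
  S_sub_N a b h := by
    rcases h with h | ⟨h1, h2 | h2⟩
    · exact Or.inl (G.S_sub_N a b h)
    · exact Or.inr ⟨h1, Or.inl (G.S_sub_N _ _ h2)⟩
    · exact Or.inr ⟨h1, Or.inr (G.S_sub_N _ _ h2)⟩

def doCalls (G : GossipGraph A) (σ : List (A × A)) : GossipGraph A :=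
  σ.foldl doCall G

def PossibleSeq (G : GossipGraph A) : List (A × A) → Prop
  | [] => True
  | c :: σ => c.1 ≠ c.2 ∧ G.N c.1 c.2 ∧ PossibleSeq (doCall G c) σ

mutual
  inductive Form (A : Type) : Type where
    | top : Form A
    | atomN : A → A → Form A
    | atomS : A → A → Form A
    | neg : Form A → Form A
    | conj : Form A → Form A → Form A
    | K : A → (A → A → Form A) → Form A → Form A
    | box : Prog A → Form A → Form A
  inductive Prog (A : Type) : Type where
    | test : Form A → Prog A
    | call : A → A → Prog A
    | seq : Prog A → Prog A → Prog A
    | cup : Prog A → Prog A → Prog A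
    | star : Prog A → Prog A
end

abbrev Protocol (A : Type) := A → A → Form A

inductive Epi (G : GossipGraph A) (perm : List (A × A) → (A × A) → Prop) (a : A) :
    List (A × A) → List (A × A) → Prop where
  | refl : Epi G perm a [] []
  | call_out {σ τ : List (A × A)} {b : A} :
      Epi G perm a σ τ →
      (∀ x, (doCalls G σ).N b x ↔ (doCalls G τ).N b x) →
      (∀ x, (doCalls G σ).S b x ↔ (doCalls G τ).S b x) →
      perm σ (a, b) → perm τ (a, b) →
      Epi G perm a (σ ++ [(a, b)]) (τ ++ [(a, b)])
  | call_in {σ τ : List (A × A)} {b : A} :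
      Epi G perm a σ τ →
      (∀ x, (doCalls G σ).N b x ↔ (doCalls G τ).N b x) →
      (∀ x, (doCalls G σ).S b x ↔ (doCalls G τ).S b x) →
      perm σ (b, a) → perm τ (b, a) →
      Epi G perm a (σ ++ [(b, a)]) (τ ++ [(b, a)])
  | other {σ τ : List (A × A)} {c d e f : A} :
      Epi G perm a σ τ →
      c ≠ a → d ≠ a → e ≠ a → f ≠ a →
      perm σ (c, d) → perm τ (e, f) →
      Epi G perm a (σ ++ [(c, d)]) (τ ++ [(e, f)])

mutual
  def Sat (G : GossipGraph A) : List (A × A) → Form A → Prop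
    | _, Form.top => True
    | σ, Form.atomN a b => (doCalls G σ).N a b
    | σ, Form.atomS a b => (doCalls G σ).S a b
    | σ, Form.neg φ => ¬ Sat G σ φ
    | σ, Form.conj φ ψ => Sat G σ φ ∧ Sat G σ ψ
    | σ, Form.K a P φ =>
        ∀ τ, Epi G (fun ρ c => c.1 ≠ c.2 ∧ (doCalls G ρ).N c.1 c.2 ∧ Sat G ρ (P c.1 c.2)) a τ σ →
          Sat G τ φ
    | σ, Form.box π φ => ∀ τ, ProgRel G π σ τ → Sat G τ φ
  def ProgRel (G : GossipGraph A) : Prog A → List (A × A) → List (A × A) → Prop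
    | Prog.test φ, σ, τ => σ = τ ∧ Sat G σ φ
    | Prog.call a b, σ, τ => a ≠ b ∧ (doCalls G σ).N a b ∧ τ = σ ++ [(a, b)]
    | Prog.seq π π', σ, τ => ∃ ρ, ProgRel G π σ ρ ∧ ProgRel G π' ρ τ
    | Prog.cup π π', σ, τ => ProgRel G π σ τ ∨ ProgRel G π' σ τ
    | Prog.star π, σ, τ => Relation.ReflTransGen (fun x y => ProgRel G π x y) σ τ
end


/-- A call `ab` is `P`-permitted at `(G, σ)` iff `a ≠ b`, `N^σ a b` and `G,σ ⊨ P_{ab}`. -/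
def Permits (G : GossipGraph A) (P : Protocol A) (σ : List (A × A)) (c : A × A) : Prop :=
  c.1 ≠ c.2 ∧ (doCalls G σ).N c.1 c.2 ∧ Sat G σ (P c.1 c.2)

/-- The least set of call sequences containing `ε` and closed under adding permitted calls. -/
inductive Ext (G : GossipGraph A) (perm : List (A × A) → (A × A) → Prop) : List (A × A) → Prop where
  | nil : Ext G perm []
  | snoc {σ : List (A × A)} {c : A × A} : Ext G perm σ → perm σ c → Ext G perm (σ ++ [c])

/-- The extension of a syntactic protocol `P` on an (initial) gossip graph `G`. -/
def extension (P : Protocol A) (G : GossipGraph A) : Set (List (A × A)) :=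
  { σ | Ext G (Permits G P) σ }

/-- A formula is valid iff it is true at every gossip state, i.e. at every pair of an
initial gossip graph and a call sequence possible on it. -/
def Valid (φ : Form A) : Prop :=
  ∀ G : GossipGraph A, Initial G → ∀ σ : List (A × A), PossibleSeq G σ → Sat G σ φ

def impF (φ ψ : Form A) : Form A := Form.neg (Form.conj φ (Form.neg ψ))
def orF (φ ψ : Form A) : Form A := Form.neg (Form.conj (Form.neg φ) (Form.neg ψ))
def iffF (φ ψ : Form A) : Form A := Form.conj (impF φ ψ) (impF ψ φ)
/-- The epistemic "possibility" dual `K̂ := ¬K¬`. -/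
def hatK (a : A) (P : Protocol A) (φ : Form A) : Form A := Form.neg (Form.K a P (Form.neg φ))

/-- A semantic protocol, as raw data: a map from (initial) gossip graphs to sets of call
sequences. -/
abbrev RawSem (A : Type) := GossipGraph A → Set (List (A × A))

/-- For a semantic protocol, a call `c` is permitted at `(G,σ)` iff `σ;c ∈ P(G)`. -/
def semPerm (Q : RawSem A) (G : GossipGraph A) (σ : List (A × A)) (c : A × A) : Prop :=
  σ ++ [c] ∈ Q G

/-- `σ` is terminal (in `Q(G)`) iff no further call is permitted. -/
def TerminalIn (Q : RawSem A) (G : GossipGraph A) (σ : List (A × A)) : Prop :=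
  ∀ c : A × A, σ ++ [c] ∉ Q G

/-- All agents are experts: everyone knows all secrets. -/
def AllExpert (G : GossipGraph A) : Prop := ∀ a b : A, G.S a b

/-- A semantic protocol: assigns to each initial gossip graph a set of call sequences
possible on it, containing the empty sequence and closed under prefixes. -/
structure SemProtocol (A : Type) : Type where
  ext : GossipGraph A → Set (List (A × A))
  nil_mem : ∀ G : GossipGraph A, Initial G → [] ∈ ext G
  prefix_closed : ∀ G : GossipGraph A, Initial G → ∀ σ c, σ ++ [c] ∈ ext G → σ ∈ ext G
  possible : ∀ G : GossipGraph A, Initial G → ∀ σ ∈ ext G, PossibleSeq G σ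

/-- A semantic protocol is epistemic iff a call `ab` is permitted at `(G,σ)` exactly when it
is permitted at all states that agent `a` cannot distinguish from `(G,σ)`. -/
def SemEpistemic (Q : RawSem A) : Prop :=
  ∀ G : GossipGraph A, Initial G → ∀ σ ∈ Q G, ∀ a b : A, a ≠ b →
    (σ ++ [(a, b)] ∈ Q G ↔ ∀ τ, Epi G (semPerm Q G) a τ σ → τ ++ [(a, b)] ∈ Q G)

/-- Relabelling the agents of a gossip graph along a permutation. -/
def mapGraph (J : Equiv.Perm A) (G : GossipGraph A) : GossipGraph A where
  N x y := G.N (J.symm x) (J.symm y)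
  S x y := G.S (J.symm x) (J.symm y)
  refl_S a := G.refl_S _
  S_sub_N a b h := G.S_sub_N _ _ h

/-- Relabelling a call sequence, callwise. -/
def mapSeq (J : Equiv.Perm A) (σ : List (A × A)) : List (A × A) :=
  σ.map (fun c => (J c.1, J c.2))

mutual
  /-- Relabelling the agents in a formula along a permutation. -/
  def mapForm (J : Equiv.Perm A) : Form A → Form A
    | Form.top => Form.top
    | Form.atomN a b => Form.atomN (J a) (J b)
    | Form.atomS a b => Form.atomS (J a) (J b)
    | Form.neg φ => Form.neg (mapForm J φ)
    | Form.conj φ ψ => Form.conj (mapForm J φ) (mapForm J ψ)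
    | Form.K a P φ => Form.K (J a) (fun x y => mapForm J (P (J.symm x) (J.symm y))) (mapForm J φ)
    | Form.box π φ => Form.box (mapProg J π) (mapForm J φ)
  /-- Relabelling the agents in a program along a permutation. -/
  def mapProg (J : Equiv.Perm A) : Prog A → Prog A
    | Prog.test φ => Prog.test (mapForm J φ)
    | Prog.call a b => Prog.call (J a) (J b)
    | Prog.seq π π' => Prog.seq (mapProg J π) (mapProg J π')
    | Prog.cup π π' => Prog.cup (mapProg J π) (mapProg J π')
    | Prog.star π => Prog.star (mapProg J π)
end

/-- A semantic protocol is symmetric iff it commutes with relabelling of the agents. -/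
def SemSymmetric (Q : RawSem A) : Prop :=
  ∀ (J : Equiv.Perm A) (G : GossipGraph A), Initial G →
    Q (mapGraph J G) = mapSeq J '' Q G

def listConj (l : List (Form A)) : Form A := l.foldr Form.conj Form.top
def listDisj (l : List (Form A)) : Form A := l.foldr orF (Form.neg Form.top)

noncomputable def pairsList (A : Type) [Fintype A] : List (A × A) := (Finset.univ : Finset (A × A)).toList
noncomputable def distinctPairs (A : Type) [Fintype A] [DecidableEq A] : List (A × A) :=
  (pairsList A).filter (fun c => decide (c.1 ≠ c.2))

/-- The formula `Ex`: all agents are experts. -/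
noncomputable def ExForm (A : Type) [Fintype A] : Form A :=
  listConj ((pairsList A).map (fun c => Form.atomS c.1 c.2))

/-- `Ex ∨ ⋁_{i≠j} (N_ij ∧ P_ij)`. -/
noncomputable def oneStepBody (A : Type) [Fintype A] [DecidableEq A] (P : Protocol A) : Form A :=
  orF (ExForm A) (listDisj ((distinctPairs A).map (fun c => Form.conj (Form.atomN c.1 c.2) (P c.1 c.2))))

/-- Hard one-step strengthening: `P_ab ∧ K_a^P [ab](Ex ∨ ⋁_{i≠j}(N_ij ∧ P_ij))`. -/
noncomputable def hardOneStep {A : Type} [Fintype A] [DecidableEq A] (P : Protocol A) : Protocol A :=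
  fun a b => Form.conj (P a b) (Form.K a P (Form.box (Prog.call a b) (oneStepBody A P)))

/-- Soft one-step strengthening: `P_ab ∧ K̂_a^P [ab](Ex ∨ ⋁_{i≠j}(N_ij ∧ P_ij))`. -/
noncomputable def softOneStep {A : Type} [Fintype A] [DecidableEq A] (P : Protocol A) : Protocol A :=
  fun a b => Form.conj (P a b) (hatK a P (Form.box (Prog.call a b) (oneStepBody A P)))

/-- The protocol `P` as a program:
`(⋃_{a≠b} ?(N_ab ∧ P_ab);ab)* ; ?⋀_{a≠b} ¬(N_ab ∧ P_ab)`. -/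
noncomputable def protProg (A : Type) [Fintype A] [DecidableEq A] (P : Protocol A) : Prog A :=
  Prog.seq
    (Prog.star (((distinctPairs A).map (fun c =>
      Prog.seq (Prog.test (Form.conj (Form.atomN c.1 c.2) (P c.1 c.2))) (Prog.call c.1 c.2))).foldr
        Prog.cup (Prog.test (Form.neg Form.top))))
    (Prog.test (listConj ((distinctPairs A).map (fun c =>
      Form.neg (Form.conj (Form.atomN c.1 c.2) (P c.1 c.2))))))

/-- Hard look-ahead strengthening: `P_ab ∧ K_a^P [ab]⟨P⟩Ex`. -/
noncomputable def hardLookAhead {A : Type} [Fintype A] [DecidableEq A] (P : Protocol A) : Protocol A :=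
  fun a b => Form.conj (P a b)
    (Form.K a P (Form.box (Prog.call a b)
      (Form.neg (Form.box (protProg A P) (Form.neg (ExForm A))))))

/-- Soft look-ahead strengthening: `P_ab ∧ K̂_a^P [ab]⟨P⟩Ex`. -/
noncomputable def softLookAhead {A : Type} [Fintype A] [DecidableEq A] (P : Protocol A) : Protocol A :=
  fun a b => Form.conj (P a b)
    (hatK a P (Form.box (Prog.call a b)
      (Form.neg (Form.box (protProg A P) (Form.neg (ExForm A))))))

/-- Hard uniform backward defoliation of a semantic protocol. -/
def HUBD (Q : RawSem A) : RawSem A := fun G =>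
  { σ | σ ∈ Q G ∧ (σ = [] ∨ ∃ τ : List (A × A), ∃ a b : A, σ = τ ++ [(a, b)] ∧
      ∀ τ', Epi G (semPerm Q G) a τ' τ →
        (τ' ++ [(a, b)] ∈ Q G ∧ TerminalIn Q G (τ' ++ [(a, b)])) →
          AllExpert (doCalls G (τ' ++ [(a, b)]))) }

/-- Soft uniform backward defoliation of a semantic protocol. -/
def SUBD (Q : RawSem A) : RawSem A := fun G =>
  { σ | σ ∈ Q G ∧ (σ = [] ∨ ∃ τ : List (A × A), ∃ a b : A, σ = τ ++ [(a, b)] ∧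
      ∃ τ', Epi G (semPerm Q G) a τ' τ ∧
        ((τ' ++ [(a, b)] ∈ Q G ∧ TerminalIn Q G (τ' ++ [(a, b)])) →
          AllExpert (doCalls G (τ' ++ [(a, b)])))) }

/-- The syntactic protocol LNS: `LNS_ab := ¬ S_ab`. -/
def LNSsyn (A : Type) : Protocol A := fun a b => Form.neg (Form.atomS a b)

/-- LNS-permitted: call `ab` permitted at `(G,σ)` iff `N^σ a b` and not `S^σ a b`. -/
def LNSperm (G : GossipGraph A) (σ : List (A × A)) (c : A × A) : Prop :=
  c.1 ≠ c.2 ∧ (doCalls G σ).N c.1 c.2 ∧ ¬ (doCalls G σ).S c.1 c.2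

/-- LNS as a semantic protocol. -/
def LNSsem : RawSem A := fun G => { σ | Ext G (LNSperm G) σ }

/-- A semantic protocol is strongly successful on `G` iff every terminal sequence makes
all agents experts. -/
def StronglySuccessfulOn (Q : RawSem A) (G : GossipGraph A) : Prop :=
  ∀ σ ∈ Q G, TerminalIn Q G σ → AllExpert (doCalls G σ)

/-- A semantic protocol is weakly successful on `G` iff some terminal sequence makes
all agents experts. -/
def WeaklySuccessfulOn (Q : RawSem A) (G : GossipGraph A) : Prop :=
  ∃ σ ∈ Q G, TerminalIn Q G σ ∧ AllExpert (doCalls G σ)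


/-! Relabelling the agents along a permutation `J` preserves everything in sight: the gossip graph
reached by a call sequence, the indistinguishability relations, the truth of formulas (with
protocols inside `K` relabelled too), and hence the extension of a protocol. A symmetric protocol
agrees with its own relabelling on all calls between distinct agents, and only those calls
matter for its extension. -/

theorem reflTransGen_map_iff_of_bijective {α β : Type*} {r : α → α → Prop}
    {p : β → β → Prop} {f : α → β} (hf : Function.Bijective f) (h : ∀ x y, p (f x) (f y) ↔ r x y)
    {x y : α} : Relation.ReflTransGen p (f x) (f y) ↔ Relation.ReflTransGen r x y := by
  refine ⟨fun hxy => ?_, Relation.ReflTransGen.lift f (fun a b hab => (h a b).mpr hab) x y⟩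
  let e := Equiv.ofBijective f hf
  have hr : ∀ a b, p a b → r (e.symm a) (e.symm b) := fun a b hab =>
    (h _ _).mp (by simpa only [e, Equiv.ofBijective_apply_symm_apply] using hab)
  simpa [e, Function.onFun] using Relation.ReflTransGen.lift e.symm hr _ _ hxy

theorem gossipGraph_ext {G H : GossipGraph A} (hN : ∀ a b, G.N a b ↔ H.N a b)
    (hS : ∀ a b, G.S a b ↔ H.S a b) : G = H := by
  obtain ⟨N, S, _, _⟩ := G
  obtain ⟨N', S', _, _⟩ := H
  obtain rfl : N = N' := funext₂ fun a b => propext (hN a b)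
  obtain rfl : S = S' := funext₂ fun a b => propext (hS a b)
  rfl

section Relabel

variable (J : Equiv.Perm A)

/-- The relabelling `J(P)_{xy} := J(P_{J⁻¹x J⁻¹y})`, as it appears inside `mapForm J (K_a^P φ)`. -/
def mapProtocol (P : Protocol A) : Protocol A := fun x y => mapForm J (P (J.symm x) (J.symm y))

theorem mapSeq_append (σ : List (A × A)) (c : A × A) :
    mapSeq J (σ ++ [c]) = mapSeq J σ ++ [(J c.1, J c.2)] := by
  simp [mapSeq]

theorem mapSeq_symm_mapSeq (σ : List (A × A)) : mapSeq J.symm (mapSeq J σ) = σ := by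
  simp [mapSeq, Function.comp_def]

theorem mapSeq_mapSeq_symm (σ : List (A × A)) : mapSeq J (mapSeq J.symm σ) = σ := by
  simpa using mapSeq_symm_mapSeq J.symm σ

theorem mapSeq_bijective : Function.Bijective (mapSeq J) :=
  ⟨Function.LeftInverse.injective (g := mapSeq J.symm) (mapSeq_symm_mapSeq J),
    Function.RightInverse.surjective (mapSeq_mapSeq_symm J)⟩

theorem doCall_mapGraph (G : GossipGraph A) (c : A × A) :
    doCall (mapGraph J G) (J c.1, J c.2) = mapGraph J (doCall G c) := by
  apply gossipGraph_ext <;> intro a b <;> simp [doCall, mapGraph, Equiv.symm_apply_eq]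

theorem doCalls_mapGraph (G : GossipGraph A) (σ : List (A × A)) :
    doCalls (mapGraph J G) (mapSeq J σ) = mapGraph J (doCalls G σ) := by
  induction σ generalizing G with
  | nil => rfl
  | cons c σ ih => exact (congrArg (doCalls · (mapSeq J σ)) (doCall_mapGraph J G c)).trans (ih _)

@[simp]
theorem doCalls_mapGraph_N (G : GossipGraph A) (σ : List (A × A)) (a b : A) :
    (doCalls (mapGraph J G) (mapSeq J σ)).N (J a) (J b) ↔ (doCalls G σ).N a b := by
  rw [doCalls_mapGraph]
  simp [mapGraph]

@[simp]
theorem doCalls_mapGraph_S (G : GossipGraph A) (σ : List (A × A)) (a b : A) :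
    (doCalls (mapGraph J G) (mapSeq J σ)).S (J a) (J b) ↔ (doCalls G σ).S a b := by
  rw [doCalls_mapGraph]
  simp [mapGraph]

theorem mapGraph_symm_mapGraph (G : GossipGraph A) : mapGraph J.symm (mapGraph J G) = G := by
  apply gossipGraph_ext <;> intro a b <;> simp [mapGraph]

def IsRelabel (perm perm' : List (A × A) → A × A → Prop) : Prop :=
  ∀ ρ c, perm' (mapSeq J ρ) (J c.1, J c.2) ↔ perm ρ c

variable {J}

theorem IsRelabel.symm {perm perm' : List (A × A) → A × A → Prop} (h : IsRelabel J perm perm') :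
    IsRelabel J.symm perm' perm := fun ρ c => by
  simpa [mapSeq_mapSeq_symm] using (h (mapSeq J.symm ρ) (J.symm c.1, J.symm c.2)).symm

theorem Epi.mapGraph {G : GossipGraph A} {perm perm' : List (A × A) → A × A → Prop}
    (hp : IsRelabel J perm perm') {a : A} {σ τ : List (A × A)} (h : Epi G perm a σ τ) :
    Epi (mapGraph J G) perm' (J a) (mapSeq J σ) (mapSeq J τ) := by
  induction h with
  | refl => exact Epi.refl
  | call_out _ hN hS h₁ h₂ ih =>
      simp only [mapSeq_append]
      exact Epi.call_out ih (J.surjective.forall.mpr fun x => by simpa using hN x)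
        (J.surjective.forall.mpr fun x => by simpa using hS x) ((hp _ _).mpr h₁) ((hp _ _).mpr h₂)
  | call_in _ hN hS h₁ h₂ ih =>
      simp only [mapSeq_append]
      exact Epi.call_in ih (J.surjective.forall.mpr fun x => by simpa using hN x)
        (J.surjective.forall.mpr fun x => by simpa using hS x) ((hp _ _).mpr h₁) ((hp _ _).mpr h₂)
  | other _ hc hd he hf h₁ h₂ ih =>
      simp only [mapSeq_append]
      exact Epi.other ih (J.injective.ne hc) (J.injective.ne hd) (J.injective.ne he)
        (J.injective.ne hf) ((hp _ _).mpr h₁) ((hp _ _).mpr h₂)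

theorem epi_mapGraph_iff {G : GossipGraph A} {perm perm' : List (A × A) → A × A → Prop}
    (hp : IsRelabel J perm perm') {a : A} {σ τ : List (A × A)} :
    Epi (mapGraph J G) perm' (J a) (mapSeq J σ) (mapSeq J τ) ↔ Epi G perm a σ τ := by
  refine ⟨fun h => ?_, Epi.mapGraph hp⟩
  simpa [mapGraph_symm_mapGraph, mapSeq_symm_mapSeq] using Epi.mapGraph hp.symm h

theorem Ext.mapSeq {G G' : GossipGraph A} {perm perm' : List (A × A) → A × A → Prop}
    (hp : IsRelabel J perm perm') {σ : List (A × A)} (h : Ext G perm σ) :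
    Ext G' perm' (mapSeq J σ) := by
  induction h with
  | nil => exact Ext.nil
  | snoc _ hc ih => simpa only [mapSeq_append] using ih.snoc ((hp _ _).mpr hc)

theorem ext_mapSeq_iff {G G' : GossipGraph A} {perm perm' : List (A × A) → A × A → Prop}
    (hp : IsRelabel J perm perm') {σ : List (A × A)} :
    Ext G' perm' (mapSeq J σ) ↔ Ext G perm σ := by
  refine ⟨fun h => ?_, Ext.mapSeq hp⟩
  simpa [mapSeq_symm_mapSeq] using Ext.mapSeq (G' := G) hp.symm h

theorem sat_K_iff (G : GossipGraph A) (σ : List (A × A)) (a : A) (P : Protocol A) (φ : Form A) :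
    Sat G σ (Form.K a P φ) ↔ ∀ τ, Epi G (Permits G P) a τ σ → Sat G τ φ := by
  rw [Sat]
  rfl

theorem isRelabel_permits {G : GossipGraph A} {P : Protocol A}
    (hP : ∀ ρ a b, Sat (mapGraph J G) (mapSeq J ρ) (mapForm J (P a b)) ↔ Sat G ρ (P a b)) :
    IsRelabel J (Permits G P) (Permits (mapGraph J G) (mapProtocol J P)) := fun ρ c => by
  simp only [Permits, mapProtocol, Equiv.symm_apply_apply, J.injective.ne_iff,
    doCalls_mapGraph_N, hP]

variable (J)

mutual

theorem sat_mapForm (G : GossipGraph A) :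
    ∀ (σ : List (A × A)) (φ : Form A),
      Sat (mapGraph J G) (mapSeq J σ) (mapForm J φ) ↔ Sat G σ φ
  | _, Form.top => Iff.rfl
  | σ, Form.atomN a b => by simp only [mapForm, Sat, doCalls_mapGraph_N]
  | σ, Form.atomS a b => by simp only [mapForm, Sat, doCalls_mapGraph_S]
  | σ, Form.neg φ => by simp only [mapForm, Sat, sat_mapForm G σ φ]
  | σ, Form.conj φ ψ => by simp only [mapForm, Sat, sat_mapForm G σ φ, sat_mapForm G σ ψ]
  | σ, Form.K a P φ => by
      have hP := isRelabel_permits (P := P) fun ρ b c => sat_mapForm G ρ (P b c)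
      rw [show mapForm J (Form.K a P φ) = Form.K (J a) (mapProtocol J P) (mapForm J φ) from rfl,
        sat_K_iff, sat_K_iff, (mapSeq_bijective J).2.forall]
      exact forall_congr' fun τ => imp_congr (epi_mapGraph_iff hP) (sat_mapForm G τ φ)
  | σ, Form.box π φ => by
      simp only [mapForm, Sat]
      rw [(mapSeq_bijective J).2.forall]
      exact forall_congr' fun τ => imp_congr (progRel_mapProg G σ τ π) (sat_mapForm G τ φ)

theorem progRel_mapProg (G : GossipGraph A) :
    ∀ (σ τ : List (A × A)) (π : Prog A),
      ProgRel (mapGraph J G) (mapProg J π) (mapSeq J σ) (mapSeq J τ) ↔ ProgRel G π σ τ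
  | σ, τ, Prog.test φ => by
      simp only [mapProg, ProgRel, (mapSeq_bijective J).1.eq_iff, sat_mapForm G σ φ]
  | σ, τ, Prog.call a b => by
      have hτ := (mapSeq_bijective J).1.eq_iff (a := τ) (b := σ ++ [(a, b)])
      rw [mapSeq_append] at hτ
      simp only [mapProg, ProgRel, J.injective.ne_iff, doCalls_mapGraph_N, hτ]
  | σ, τ, Prog.seq π π' => by
      simp only [mapProg, ProgRel]
      rw [(mapSeq_bijective J).2.exists]
      exact exists_congr fun ρ => and_congr (progRel_mapProg G σ ρ π) (progRel_mapProg G ρ τ π')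
  | σ, τ, Prog.cup π π' => by
      simp only [mapProg, ProgRel]
      exact or_congr (progRel_mapProg G σ τ π) (progRel_mapProg G σ τ π')
  | σ, τ, Prog.star π => by
      simp only [mapProg, ProgRel]
      exact reflTransGen_map_iff_of_bijective (mapSeq_bijective J)
        fun ρ ρ' => progRel_mapProg G ρ ρ' π

end

theorem extension_mapProtocol (P : Protocol A) (G : GossipGraph A) :
    extension (mapProtocol J P) (mapGraph J G) = mapSeq J '' extension P G := by
  ext σ'
  obtain ⟨σ, rfl⟩ := (mapSeq_bijective J).2 σ'
  rw [(mapSeq_bijective J).1.mem_set_image]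
  exact ext_mapSeq_iff (isRelabel_permits fun ρ a b => sat_mapForm J G ρ (P a b))

end Relabel

theorem extension_congr {P P' : Protocol A} (h : ∀ a b, a ≠ b → P a b = P' a b)
    (G : GossipGraph A) : extension P G = extension P' G := by
  have : Permits G P = Permits G P' := by
    funext ρ c
    exact propext (and_congr_right fun hne => by rw [h _ _ hne])
  simp only [extension, this]

/-- If a syntactic protocol is symmetric, then its extension is symmetric. -/
theorem symmetric_extension {A : Type} [Fintype A] (P : Protocol A)
    (hsym : ∀ (J : Equiv.Perm A) (a b : A), a ≠ b → P (J a) (J b) = mapForm J (P a b))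
    (J : Equiv.Perm A) (G : GossipGraph A) (hG : Initial G) :
    extension P (mapGraph J G) = mapSeq J '' extension P G := by
  have hP : ∀ a b, a ≠ b → P a b = mapProtocol J P a b := fun a b hab => by
    simpa [mapProtocol] using hsym J (J.symm a) (J.symm b) (J.symm.injective.ne hab)
  rw [extension_congr hP, extension_mapProtocol]

end Gossip
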